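/- arXiv:2304.14383 — 6 statements merged into one kernel-verified Lean document; each statement's English description precedes it below -/
import Mathlib

section
/- Any finite product S_Φ = V_{φ_0}(β) V_{φ_1}(β) ⋯ V_{φ_n}(β) of phased boosts has the form [[P, Q·sinh β],[Q*·sinh β, P*]] where, writing x = cosh β, P and Q are polynomials in x with complex coefficients, deg P ≤ n+1, deg Q ≤ n, P has parity (n+1) mod 2, Q has parity n mod 2, and |P|² − (x² − 1)|Q|² = 1 for all β. -/
open Matrix Complex Polynomial

/-!
Left multiplication by `V_φ(β)` preserves the shape `[[P, Q sinh β], [Q* sinh β, P*]]`: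
with `x = cosh β` and `sinh² β = x² - 1` the new pair is
`(x P + e^{iφ} (x² - 1) Q*, x Q + e^{iφ} P*)`, which raises both degrees and flips both
parities by one. The identity `|P|² - (x² - 1)|Q|² = 1` is the determinant of the product,
and every factor has determinant `cosh² β - sinh² β = 1`.
-/

/-- The phased boost `V_φ(β)`. -/
noncomputable def phasedBoost (φ β : ℝ) : Matrix (Fin 2) (Fin 2) ℂ :=
  !![(Real.cosh β : ℂ), Complex.exp (Complex.I * φ) * Real.sinh β;
     Complex.exp (-(Complex.I * φ)) * Real.sinh β, (Real.cosh β : ℂ)]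

open ComplexConjugate

namespace Polynomial

variable {R S : Type*} [Semiring R] [Semiring S]

def HasParity (r : ℕ) (p : R[X]) : Prop :=
  ∀ k, p.coeff k ≠ 0 → k % 2 = r % 2

theorem HasParity.of_mod_eq {a b : ℕ} {p : R[X]} (hp : HasParity a p) (hab : a % 2 = b % 2) :
    HasParity b p :=
  fun k hk => (hp k hk).trans hab

theorem hasParity_C (c : R) : HasParity 0 (C c) := by
  intro k hk
  obtain rfl : k = 0 := by_contra fun h => hk (coeff_C_of_ne_zero h)
  rfl

theorem hasParity_one : HasParity 0 (1 : R[X]) := by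
  simpa using hasParity_C (1 : R)

theorem hasParity_X_pow (n : ℕ) : HasParity n (X ^ n : R[X]) := by
  intro k hk
  obtain rfl : k = n := by_contra fun h => hk (by simp [coeff_X_pow, h])
  rfl

theorem hasParity_X : HasParity 1 (X : R[X]) := by
  simpa using hasParity_X_pow (R := R) 1

theorem HasParity.add {a : ℕ} {p q : R[X]} (hp : HasParity a p) (hq : HasParity a q) :
    HasParity a (p + q) := by
  intro k hk
  by_cases hpk : p.coeff k = 0
  · exact hq k fun hqk => hk (by simp [hpk, hqk])
  · exact hp k hpk

theorem HasParity.neg {R : Type*} [Ring R] {a : ℕ} {p : R[X]} (hp : HasParity a p) :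
    HasParity a (-p) :=
  fun k hk => hp k (by simpa using hk)

theorem HasParity.sub {R : Type*} [Ring R] {a : ℕ} {p q : R[X]} (hp : HasParity a p)
    (hq : HasParity a q) : HasParity a (p - q) := by
  rw [sub_eq_add_neg]
  exact hp.add hq.neg

theorem HasParity.mul {a b : ℕ} {p q : R[X]} (hp : HasParity a p) (hq : HasParity b q) :
    HasParity (a + b) (p * q) := by
  intro k hk
  rw [coeff_mul] at hk
  obtain ⟨⟨i, j⟩, hij, hne⟩ := Finset.exists_ne_zero_of_sum_ne_zero hk
  rw [Finset.HasAntidiagonal.mem_antidiagonal] at hij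
  have hi := hp i fun h => hne (by simp [h])
  have hj := hq j fun h => hne (by simp [h])
  omega

theorem HasParity.map {a : ℕ} {p : R[X]} (hp : HasParity a p) (f : R →+* S) :
    HasParity a (p.map f) :=
  fun k hk => hp k fun h => hk (by simp [coeff_map, h])

end Polynomial

section QSP

variable (φ β : ℝ) (P Q : ℂ[X])

noncomputable def qspMatrix : Matrix (Fin 2) (Fin 2) ℂ :=
  !![P.eval (Real.cosh β : ℂ), Q.eval (Real.cosh β : ℂ) * Real.sinh β;
     conj (Q.eval (Real.cosh β : ℂ)) * Real.sinh β, conj (P.eval (Real.cosh β : ℂ))]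

noncomputable def qspNextP : ℂ[X] :=
  X * P + C (exp (I * φ)) * ((X ^ 2 - 1) * Q.map (starRingEnd ℂ))

noncomputable def qspNextQ : ℂ[X] :=
  X * Q + C (exp (I * φ)) * P.map (starRingEnd ℂ)

theorem eval_map_conj_ofReal (x : ℝ) :
    (P.map (starRingEnd ℂ)).eval (x : ℂ) = conj (P.eval (x : ℂ)) := by
  conv_lhs => rw [← conj_ofReal x]
  rw [eval_map, eval₂_at_apply]

theorem conj_exp_I_mul_ofReal : conj (exp (I * φ)) = exp (-(I * φ)) := by
  rw [← exp_conj]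
  simp

theorem exp_I_mul_ofReal_mul_conj : exp (I * φ) * conj (exp (I * φ)) = 1 := by
  rw [conj_exp_I_mul_ofReal, ← exp_add, add_neg_cancel, exp_zero]

theorem ofReal_sinh_sq : (Real.sinh β : ℂ) ^ 2 = (Real.cosh β : ℂ) ^ 2 - 1 := by
  exact_mod_cast Real.sinh_sq β

theorem phasedBoost_eq_qspMatrix : phasedBoost φ β = qspMatrix β X (C (exp (I * φ))) := by
  rw [phasedBoost, qspMatrix, eval_X, eval_C, conj_ofReal, conj_exp_I_mul_ofReal]

theorem phasedBoost_mul_qspMatrix :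
    phasedBoost φ β * qspMatrix β P Q = qspMatrix β (qspNextP φ P Q) (qspNextQ φ P Q) := by
  have hs := ofReal_sinh_sq β
  rw [phasedBoost, qspMatrix, qspMatrix, mul_fin_two, ← conj_exp_I_mul_ofReal]
  simp only [qspNextP, qspNextQ, eval_add, eval_mul, eval_X, eval_C, eval_pow, eval_sub, eval_one,
    eval_map_conj_ofReal, map_add, map_mul, map_sub, map_pow, map_one, conj_conj, conj_ofReal]
  rw [← hs]
  ext i j
  fin_cases i <;> fin_cases j <;>
    (dsimp only [Fin.zero_eta, Fin.mk_one, Fin.isValue, of_apply, cons_val_zero, cons_val_one]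
     ring)

theorem det_phasedBoost : (phasedBoost φ β).det = 1 := by
  rw [phasedBoost, det_fin_two_of, ← conj_exp_I_mul_ofReal]
  linear_combination (-(Real.sinh β : ℂ) ^ 2) * exp_I_mul_ofReal_mul_conj φ - ofReal_sinh_sq β

theorem det_qspMatrix :
    (qspMatrix β P Q).det = ((normSq (P.eval (Real.cosh β : ℂ)) -
      (Real.cosh β ^ 2 - 1) * normSq (Q.eval (Real.cosh β : ℂ)) : ℝ) : ℂ) := by
  rw [qspMatrix, det_fin_two_of, ofReal_sub, ofReal_mul, ofReal_sub, ofReal_pow, ofReal_one,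
    ← mul_conj, ← mul_conj, ← ofReal_sinh_sq]
  ring

variable {P Q}

theorem natDegree_qspNextP_le {n : ℕ} (hP : P.natDegree ≤ n + 1) (hQ : Q.natDegree ≤ n) :
    (qspNextP φ P Q).natDegree ≤ n + 2 := by
  have hX2 : ((X : ℂ[X]) ^ 2 - 1).natDegree ≤ 2 := by compute_degree
  refine natDegree_add_le_of_degree_le ?_ ?_
  · exact natDegree_mul_le_of_le natDegree_X_le hP |>.trans (by omega)
  · refine (natDegree_C_mul_le _ _).trans ?_
    exact natDegree_mul_le_of_le hX2 (natDegree_map_le.trans hQ) |>.trans (by omega)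

theorem natDegree_qspNextQ_le {n : ℕ} (hP : P.natDegree ≤ n + 1) (hQ : Q.natDegree ≤ n) :
    (qspNextQ φ P Q).natDegree ≤ n + 1 := by
  refine natDegree_add_le_of_degree_le ?_ ?_
  · exact natDegree_mul_le_of_le natDegree_X_le hQ |>.trans (by omega)
  · exact (natDegree_C_mul_le _ _).trans (natDegree_map_le.trans hP)

theorem hasParity_qspNextP {n : ℕ} (hP : HasParity (n + 1) P) (hQ : HasParity n Q) :
    HasParity (n + 2) (qspNextP φ P Q) := by
  have hX2 : HasParity 2 ((X : ℂ[X]) ^ 2 - 1) :=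
    (hasParity_X_pow 2).sub (hasParity_one.of_mod_eq rfl)
  refine (hasParity_X.mul hP).of_mod_eq (by omega) |>.add ?_
  exact ((hasParity_C _).mul (hX2.mul (hQ.map _))).of_mod_eq (by omega)

theorem hasParity_qspNextQ {n : ℕ} (hP : HasParity (n + 1) P) (hQ : HasParity n Q) :
    HasParity (n + 1) (qspNextQ φ P Q) := by
  refine (hasParity_X.mul hQ).of_mod_eq (by omega) |>.add ?_
  exact ((hasParity_C _).mul (hP.map _)).of_mod_eq (by omega)

end QSP

theorem exists_prod_phasedBoost_eq_qspMatrix (n : ℕ) (Φ : Fin (n + 1) → ℝ) :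
    ∃ P Q : ℂ[X], P.natDegree ≤ n + 1 ∧ Q.natDegree ≤ n ∧ HasParity (n + 1) P ∧
      HasParity n Q ∧
      ∀ β : ℝ, (List.ofFn fun i => phasedBoost (Φ i) β).prod = qspMatrix β P Q := by
  induction n with
  | zero =>
    refine ⟨X, C (exp (I * Φ 0)), natDegree_X_le, (natDegree_C _).le, hasParity_X,
      hasParity_C _, fun β => ?_⟩
    simp [phasedBoost_eq_qspMatrix]
  | succ n ih =>
    obtain ⟨P, Q, hP, hQ, hPpar, hQpar, hprod⟩ := ih (Fin.tail Φ)
    refine ⟨qspNextP (Φ 0) P Q, qspNextQ (Φ 0) P Q, natDegree_qspNextP_le (Φ 0) hP hQ,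
      natDegree_qspNextQ_le (Φ 0) hP hQ, hasParity_qspNextP (Φ 0) hPpar hQpar,
      hasParity_qspNextQ (Φ 0) hPpar hQpar, fun β => ?_⟩
    rw [List.ofFn_succ, List.prod_cons, ← phasedBoost_mul_qspMatrix, ← hprod]
    rfl

theorem det_prod_phasedBoost {n : ℕ} (Φ : Fin n → ℝ) (β : ℝ) :
    (List.ofFn fun i => phasedBoost (Φ i) β).prod.det = 1 := by
  rw [← coe_detMonoidHom, map_list_prod, List.map_ofFn]
  exact List.prod_eq_one (by simp [det_phasedBoost])

/-- Any product `V_{φ₀}(β) ⋯ V_{φₙ}(β)` of `n+1` phased boosts has the form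
`[[P, Q sinh β], [Q* sinh β, P*]]` with `P, Q` polynomials in `x = cosh β` of
degrees at most `n+1` and `n`, having parities `(n+1) % 2` and `n % 2`
respectively, and satisfying `|P|² - (x² - 1)|Q|² = 1`. -/
theorem su11_qsp_functional_form (n : ℕ) (Φ : Fin (n + 1) → ℝ) :
    ∃ P Q : Polynomial ℂ,
      P.natDegree ≤ n + 1 ∧ Q.natDegree ≤ n ∧
      (∀ k, P.coeff k ≠ 0 → k % 2 = (n + 1) % 2) ∧
      (∀ k, Q.coeff k ≠ 0 → k % 2 = n % 2) ∧
      (∀ β : ℝ,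
        (List.ofFn fun i : Fin (n + 1) => phasedBoost (Φ i) β).prod =
          !![P.eval ((Real.cosh β : ℂ)),
             Q.eval ((Real.cosh β : ℂ)) * Real.sinh β;
             (starRingEnd ℂ) (Q.eval ((Real.cosh β : ℂ))) * Real.sinh β,
             (starRingEnd ℂ) (P.eval ((Real.cosh β : ℂ)))]) ∧
      (∀ β : ℝ,
        Complex.normSq (P.eval ((Real.cosh β : ℂ))) -
          ((Real.cosh β) ^ 2 - 1) * Complex.normSq (Q.eval ((Real.cosh β : ℂ))) = 1) := by
  obtain ⟨P, Q, hP, hQ, hPpar, hQpar, hprod⟩ := exists_prod_phasedBoost_eq_qspMatrix n Φ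
  refine ⟨P, Q, hP, hQ, hPpar, hQpar, hprod, fun β => ?_⟩
  have hdet := det_prod_phasedBoost Φ β
  rw [hprod, det_qspMatrix] at hdet
  exact_mod_cast hdet
end

section
/- Among real polynomials P of degree at most n satisfying |P(x)| ≤ 1 for all x ∈ [−1,1], the Chebyshev polynomial T_n has extremal growth outside the interval: for every x with |x| > 1 and every such P, |P(x)| ≤ |T_n(x)|. -/
/-!
On `[1, ∞)` this is the case `k = 0` of Mathlib's bound
`Polynomial.Chebyshev.eval_iterate_derivative_le_of_forall_abs_le_one`, applied to `P` and `-P`.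
The substitution `x ↦ -x` preserves the hypotheses on `P` and changes `T_n` only by the sign
`(-1)ⁿ`, which transfers the bound to `(-∞, -1]`.
-/

open Polynomial Polynomial.Chebyshev

namespace Polynomial.Chebyshev

theorem abs_eval_T_real_neg (n : ℤ) (x : ℝ) : |(T ℝ n).eval (-x)| = |(T ℝ n).eval x| := by
  simp [T_eval_neg, abs_mul]

variable {n : ℕ} {P : ℝ[X]}

theorem abs_eval_le_eval_T_real_of_one_le (hdeg : P.natDegree ≤ n)
    (hbound : ∀ x ∈ Set.Icc (-1 : ℝ) 1, |P.eval x| ≤ 1) {x : ℝ} (hx : 1 ≤ x) :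
    |P.eval x| ≤ (T ℝ n).eval x := by
  have hdeg' : P.degree ≤ n := degree_le_of_natDegree_le hdeg
  have upper := eval_iterate_derivative_le_of_forall_abs_le_one (k := 0) hx hdeg' hbound
  have lower := eval_iterate_derivative_le_of_forall_abs_le_one (k := 0) (P := -P) hx
    (by rwa [degree_neg]) (by simpa only [eval_neg, abs_neg] using hbound)
  simp only [Function.iterate_zero, id_eq, eval_neg] at upper lower
  exact abs_le.mpr ⟨by linarith, upper⟩

theorem natDegree_comp_neg_X_le (hdeg : P.natDegree ≤ n) : (P.comp (-X)).natDegree ≤ n := by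
  simpa [natDegree_comp] using hdeg

end Polynomial.Chebyshev

/-- Extremal growth of Chebyshev polynomials: among real polynomials of degree at
most `n` bounded by `1` in modulus on `[-1, 1]`, the Chebyshev polynomial `T_n`
grows fastest in modulus outside `[-1, 1]`. -/
theorem chebyshev_extremal_growth (n : ℕ) (P : Polynomial ℝ)
    (hdeg : P.natDegree ≤ n)
    (hbound : ∀ x ∈ Set.Icc (-1 : ℝ) 1, |P.eval x| ≤ 1) :
    ∀ x : ℝ, 1 < |x| → |P.eval x| ≤ |(Polynomial.Chebyshev.T ℝ n).eval x| := by
  intro x hx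
  rcases le_or_gt 0 x with hx0 | hx0
  · calc |P.eval x|
        ≤ (T ℝ n).eval x :=
          abs_eval_le_eval_T_real_of_one_le hdeg hbound (by rw [abs_of_nonneg hx0] at hx; linarith)
      _ ≤ |(T ℝ n).eval x| := le_abs_self _
  · have hbound' : ∀ y ∈ Set.Icc (-1 : ℝ) 1, |(P.comp (-X)).eval y| ≤ 1 := fun y hy => by
      simpa using hbound (-y) ⟨by linarith [hy.2], by linarith [hy.1]⟩
    calc |P.eval x|
        = |(P.comp (-X)).eval (-x)| := by simp
      _ ≤ (T ℝ n).eval (-x) :=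
          abs_eval_le_eval_T_real_of_one_le (natDegree_comp_neg_X_le hdeg) hbound'
            (by rw [abs_of_neg hx0] at hx; linarith)
      _ ≤ |(T ℝ n).eval (-x)| := le_abs_self _
      _ = |(T ℝ n).eval x| := abs_eval_T_real_neg n x
end

section
/- If P and Q are real polynomials of definite opposite parity satisfying P(x)² − (x² − 1)Q(x)² = 1 identically, then |P(x)| ≤ 1 for all x ∈ [−1,1] and P(x)² ≥ 1 for all x ≥ 1. -/
open Polynomial

/-- If `P, Q` are real polynomials of definite, opposite parity with
`P² - (x² - 1)Q² = 1` identically, then `|P| ≤ 1` on `[-1, 1]` and `P² ≥ 1` on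
`[1, ∞)`. -/
theorem su11_poly_bounds (P Q : Polynomial ℝ) (p : ℕ)
    (hP : ∀ k, P.coeff k ≠ 0 → k % 2 = p % 2)
    (hQ : ∀ k, Q.coeff k ≠ 0 → k % 2 = (p + 1) % 2)
    (h : P ^ 2 - (X ^ 2 - 1) * Q ^ 2 = 1) :
    (∀ x ∈ Set.Icc (-1 : ℝ) 1, |P.eval x| ≤ 1) ∧
    (∀ x : ℝ, 1 ≤ x → 1 ≤ (P.eval x) ^ 2) := by
  have key : ∀ x : ℝ, (P.eval x) ^ 2 - (x ^ 2 - 1) * (Q.eval x) ^ 2 = 1 := by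
    intro x
    have := congrArg (eval x) h
    simpa using this
  constructor
  · intro x hx
    obtain ⟨h1, h2⟩ := hx
    have hq : (x ^ 2 - 1) * (Q.eval x) ^ 2 ≤ 0 :=
      mul_nonpos_of_nonpos_of_nonneg (by nlinarith) (sq_nonneg _)
    have hp : (P.eval x) ^ 2 ≤ 1 := by linarith [key x]
    rw [abs_le]
    constructor <;> nlinarith [sq_nonneg (P.eval x + 1), sq_nonneg (P.eval x - 1)]
  · intro x hx
    have hq : 0 ≤ (x ^ 2 - 1) * (Q.eval x) ^ 2 :=
      mul_nonneg (by nlinarith) (sq_nonneg _)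
    linarith [key x]
end

section
/- For φ ∈ (0, π/2) and real x with 1 ≤ x < sec φ, the two eigenvalues of e^{iφσ_z} · [[x, √(x²−1)],[√(x²−1), x]] both have complex modulus exactly 1. -/
open Matrix Complex

/-- The constant-phase SU(1,1) QSP iterate `e^{iφσ_z} V(x)`. -/
noncomputable def iterate9 (φ x : ℝ) : Matrix (Fin 2) (Fin 2) ℂ :=
  !![Complex.exp (Complex.I * φ), 0; 0, Complex.exp (-(Complex.I * φ))] *
    !![(x : ℂ), (Real.sqrt (x ^ 2 - 1) : ℂ); (Real.sqrt (x ^ 2 - 1) : ℂ), (x : ℂ)]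

/-!
The iterate has determinant `1` and trace `2 x cos φ`, so its eigenvalues are the roots of
`z² - 2tz + 1` with `t = x cos φ ∈ (0, 1)`. Such a root cannot be real, since
`(z - t)² = t² - 1 < 0`; comparing imaginary parts then forces `Re z = t`, and the real part
gives `|z|² = 1`.
-/

theorem Matrix.eval_charpoly_fin_two_eq_zero {K : Type*} [Field K]
    {A : Matrix (Fin 2) (Fin 2) K} {μ : K} (hμ : μ ∈ spectrum K A) :
    μ ^ 2 - A.trace * μ + A.det = 0 := by
  simpa [Matrix.charpoly_fin_two] using Matrix.mem_spectrum_iff_isRoot_charpoly.mp hμ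

theorem Complex.norm_eq_one_of_sq_sub_two_mul_add_one_eq_zero {t : ℝ} (ht : |t| < 1) {z : ℂ}
    (hz : z ^ 2 - 2 * t * z + 1 = 0) : ‖z‖ = 1 := by
  have hre : z.re ^ 2 - z.im ^ 2 - 2 * t * z.re + 1 = 0 := by
    simpa [pow_two] using congrArg Complex.re hz
  have him : z.im * (z.re - t) = 0 := by
    have := congrArg Complex.im hz
    simp only [pow_two, sub_im, add_im, mul_im, mul_re, re_ofNat, im_ofNat, ofReal_re,
      ofReal_im, one_im, zero_im] at this
    linear_combination this / 2
  have ht2 : t ^ 2 < 1 := by nlinarith [abs_nonneg t, sq_abs t]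
  have hne : z.im ≠ 0 := by
    intro h0
    rw [h0] at hre
    nlinarith [sq_nonneg (z.re - t)]
  have hret : z.re = t := sub_eq_zero.mp ((mul_eq_zero.mp him).resolve_left hne)
  have hnormSq : Complex.normSq z = 1 := by
    rw [Complex.normSq_apply]
    subst hret
    nlinarith
  rw [Complex.norm_def, hnormSq, Real.sqrt_one]

theorem det_iterate9 (φ : ℝ) {x : ℝ} (hx : 1 ≤ x ^ 2) : (iterate9 φ x).det = 1 := by
  have hsqrt : ((Real.sqrt (x ^ 2 - 1) : ℝ) : ℂ) ^ 2 = (x : ℂ) ^ 2 - 1 := by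
    rw [← Complex.ofReal_pow, Real.sq_sqrt (sub_nonneg.mpr hx)]
    push_cast; ring
  have hexp : cexp (I * φ) * cexp (-(I * φ)) = 1 := by
    rw [← Complex.exp_add, add_neg_cancel, Complex.exp_zero]
  rw [iterate9, Matrix.det_mul, Matrix.det_fin_two_of, Matrix.det_fin_two_of]
  linear_combination (x ^ 2 - ((Real.sqrt (x ^ 2 - 1) : ℝ) : ℂ) ^ 2) * hexp - hsqrt

theorem trace_iterate9 (φ x : ℝ) : (iterate9 φ x).trace = 2 * (x * Real.cos φ : ℝ) := by
  rw [iterate9, Matrix.trace_fin_two]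
  simp only [Matrix.mul_apply, Fin.sum_univ_two, of_apply, cons_val', cons_val_zero,
    cons_val_one, empty_val', cons_val_fin_one, zero_mul, add_zero, zero_add]
  push_cast
  rw [Complex.cos]
  ring_nf

/-- For `1 ≤ x < sec φ`, both eigenvalues of the iterate have modulus one. -/
theorem iterate_eigenvalues_unimodular (φ x : ℝ) (hφ : φ ∈ Set.Ioo 0 (Real.pi / 2))
    (hx : 1 ≤ x) (hsec : x < 1 / Real.cos φ) :
    ∀ μ ∈ spectrum ℂ (iterate9 φ x), ‖μ‖ = 1 := by
  intro μ hμ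
  have hcos : 0 < Real.cos φ :=
    Real.cos_pos_of_mem_Ioo ⟨by linarith [hφ.1, Real.pi_pos], hφ.2⟩
  have ht : |x * Real.cos φ| < 1 := by
    rw [abs_of_pos (by positivity)]
    rwa [lt_div_iff₀ hcos] at hsec
  apply Complex.norm_eq_one_of_sq_sub_two_mul_add_one_eq_zero ht
  simpa [det_iterate9 φ (one_le_pow₀ hx), trace_iterate9, mul_assoc] using
    Matrix.eval_charpoly_fin_two_eq_zero hμ
end

section
/- For the constant-phase product S_n(x) = (e^{iφσ_z} V(x))^n with V(x) = [[x, √(x²−1)],[√(x²−1), x]], the top-left entry P_n(x) satisfies, for x > sec φ: |P_n(x)|² ≥ T_n(x cos φ)², where T_n is the n-th Chebyshev polynomial; in particular |P_n(x)| grows at least exponentially in n for fixed x > sec φ. -/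
/-!
The matrix `M = e^{iφσ_z} V(x)` has determinant `1` and trace `2y` with `y = x cos φ`, so
Cayley–Hamilton gives `M² = 2y M - 1`, and then `Mⁿ = T_n(y) • 1 + U_{n-1}(y) • (M - y • 1)`.
The top-left entry of `M - y • 1` is `i x sin φ`, purely imaginary, hence `Re P_n = T_n(y)`.
The exponential lower bound comes from `T_n(cosh t) = cosh (n t) ≥ e^{n t} / 2`
with `t = arcosh y`, since `e^t = y + √(y² - 1)`.
-/

open Matrix Complex Polynomial

/-- The constant-phase SU(1,1) QSP iterate `e^{iφσ_z} V(x)`. -/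
noncomputable def iterate15 (φ x : ℝ) : Matrix (Fin 2) (Fin 2) ℂ :=
  !![Complex.exp (Complex.I * φ), 0; 0, Complex.exp (-(Complex.I * φ))] *
    !![(x : ℂ), (Real.sqrt (x ^ 2 - 1) : ℂ); (Real.sqrt (x ^ 2 - 1) : ℂ), (x : ℂ)]

namespace Polynomial.Chebyshev

theorem add_sqrt_pow_div_two_le_eval_T {y : ℝ} (hy : 1 ≤ y) (n : ℕ) :
    (y + √(y ^ 2 - 1)) ^ n / 2 ≤ (T ℝ n).eval y := by
  have hT : (T ℝ n).eval y = Real.cosh (n * Real.arcosh y) := by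
    simpa [Real.cosh_arcosh hy] using T_real_cosh (Real.arcosh y) n
  rw [hT, Real.cosh_eq, ← Real.exp_arcosh hy, ← Real.exp_nat_mul]
  gcongr
  exact le_add_of_nonneg_right (Real.exp_pos _).le

variable {R A : Type*} [CommRing R] [Ring A] [Algebra R A]

theorem pow_eq_eval_T_smul_one_add_eval_U_smul {a : A} {y : R} (h : a ^ 2 = (2 * y) • a - 1)
    (n : ℕ) : a ^ n = (T R n).eval y • (1 : A) + (U R (n - 1 : ℤ)).eval y • (a - y • 1) := by
  induction n using Nat.twoStepInduction with
  | zero => simp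
  | one => simp
  | more n ih₀ ih₁ =>
    have hrec : a ^ (n + 2) = (2 * y) • a ^ (n + 1) - a ^ n := by
      rw [pow_add, h, mul_sub, mul_smul_comm, mul_one, ← pow_succ]
    have hT := congrArg (eval y) (T_add_two R n)
    have hU := congrArg (eval y) (U_add_one R n)
    simp only [eval_sub, eval_mul, eval_ofNat, eval_X] at hT hU
    push_cast at ih₁ ⊢
    rw [hrec, ih₀, ih₁, add_sub_cancel_right, show (n : ℤ) + 2 - 1 = n + 1 by ring, hT, hU]
    module

end Polynomial.Chebyshev

theorem Matrix.sq_eq_trace_smul_sub_det_smul_one {R : Type*} [CommRing R]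
    (M : Matrix (Fin 2) (Fin 2) R) : M ^ 2 = M.trace • M - M.det • 1 := by
  ext i j
  fin_cases i <;> fin_cases j <;> simp [sq, Matrix.mul_apply, trace_fin_two, det_fin_two] <;> ring

section iterate15

variable {φ x : ℝ}

theorem iterate15_eq : iterate15 φ x =
    !![Complex.exp (I * φ) * x, Complex.exp (I * φ) * √(x ^ 2 - 1);
      Complex.exp (-(I * φ)) * √(x ^ 2 - 1), Complex.exp (-(I * φ)) * x] := by
  simp [iterate15]

theorem iterate15_apply_zero_zero : iterate15 φ x 0 0 = x * Real.cos φ + x * Real.sin φ * I := by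
  rw [iterate15_eq, of_apply, cons_val', cons_val_zero, cons_val_zero, mul_comm I, exp_mul_I]
  push_cast
  ring

theorem trace_iterate15 : (iterate15 φ x).trace = 2 * (x * Real.cos φ : ℝ) := by
  rw [iterate15_eq, trace_fin_two_of, ofReal_mul, ofReal_cos, Complex.cos]
  ring_nf

theorem det_iterate15 (hx : 1 ≤ x ^ 2) : (iterate15 φ x).det = 1 := by
  have hs : (√(x ^ 2 - 1) : ℂ) ^ 2 = x ^ 2 - 1 := by
    exact_mod_cast congrArg ofReal (Real.sq_sqrt (sub_nonneg.2 hx))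
  rw [iterate15, det_mul, det_fin_two_of, det_fin_two_of, ← Complex.exp_add]
  simp only [add_neg_cancel, Complex.exp_zero, mul_zero, sub_zero, one_mul]
  linear_combination -hs

theorem iterate15_sq (hx : 1 ≤ x ^ 2) :
    iterate15 φ x ^ 2 = (2 * ((x * Real.cos φ : ℝ) : ℂ)) • iterate15 φ x - 1 := by
  rw [sq_eq_trace_smul_sub_det_smul_one, trace_iterate15, det_iterate15 hx, one_smul]

theorem iterate15_pow_apply_zero_zero (hx : 1 ≤ x ^ 2) (n : ℕ) :
    (iterate15 φ x ^ n) 0 0 = (Chebyshev.T ℝ n).eval (x * Real.cos φ) +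
      ((Chebyshev.U ℝ (n - 1 : ℤ)).eval (x * Real.cos φ) * (x * Real.sin φ) : ℝ) * I := by
  rw [Chebyshev.pow_eq_eval_T_smul_one_add_eval_U_smul (iterate15_sq hx) n]
  simp only [Matrix.add_apply, Matrix.smul_apply, Matrix.sub_apply, one_apply_eq, smul_eq_mul,
    iterate15_apply_zero_zero, Chebyshev.complex_ofReal_eval_T]
  push_cast
  ring

end iterate15

/-- For `x > sec φ`, the top-left entry `P_n` of the constant-phase product grows
at least as fast as the Chebyshev polynomial `T_n(x cos φ)`; in particular it
grows at least exponentially in `n`. -/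
theorem constant_phase_growth (φ x : ℝ) (n : ℕ) (hφ : φ ∈ Set.Ioo 0 (Real.pi / 2))
    (hx : 1 / Real.cos φ < x) :
    ((Polynomial.Chebyshev.T ℝ n).eval (x * Real.cos φ)) ^ 2 ≤
      Complex.normSq (((iterate15 φ x) ^ n) 0 0) ∧
    (x * Real.cos φ + Real.sqrt ((x * Real.cos φ) ^ 2 - 1)) ^ n / 2 ≤
      (Polynomial.Chebyshev.T ℝ n).eval (x * Real.cos φ) := by
  have hcos : 0 < Real.cos φ :=
    Real.cos_pos_of_mem_Ioo ⟨by linarith [hφ.1, Real.pi_pos], hφ.2⟩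
  have hy : 1 < x * Real.cos φ := by rwa [div_lt_iff₀ hcos] at hx
  have hx1 : 1 < x := by nlinarith [Real.cos_le_one φ]
  refine ⟨?_, Chebyshev.add_sqrt_pow_div_two_le_eval_T hy.le n⟩
  rw [iterate15_pow_apply_zero_zero (one_le_pow₀ hx1.le), normSq_add_mul_I]
  exact le_add_of_nonneg_right (sq_nonneg _)
end

section
/- If σ > 1 and P_n(x) is the top-left entry of ((diag(e^{iφ}, e^{−iφ})) · [[x, √(x²−1)],[√(x²−1), x]])^n with cos φ = 1/σ, then for all x with 1 ≤ x < σ, the modulus |P_n(x)| is bounded above by (1 + x tan φ / √(sec²φ − x²)), a bound independent of n. -/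
/-!
The iterate `M` has determinant `1` and trace `2c` with `c = x cos φ ∈ (0, 1)`, so its eigenvalues
are `e^{±iθ}` with `θ = arccos c`. By Cayley–Hamilton the top-left entry of `Mⁿ` is
`α e^{inθ} + β e^{-inθ}` with `α + β = 1` and `α - β = (M₀₀ - cos θ) / (i sin θ)`, hence has
modulus at most `1 + |α - β| = 1 + x sin φ / sin θ`; finally `sin θ = cos φ √(sec² φ - x²)`.
-/

open Matrix Complex

/-- The constant-phase SU(1,1) QSP iterate `e^{iφσ_z} V(x)`. -/
noncomputable def iterate18 (φ x : ℝ) : Matrix (Fin 2) (Fin 2) ℂ :=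
  !![Complex.exp (Complex.I * φ), 0; 0, Complex.exp (-(Complex.I * φ))] *
    !![(x : ℂ), (Real.sqrt (x ^ 2 - 1) : ℂ); (Real.sqrt (x ^ 2 - 1) : ℂ), (x : ℂ)]

theorem eq_add_pow_of_two_step_recurrence {R : Type*} [CommRing R] {u : ℕ → R} {a b α β : R}
    (hrec : ∀ n, u (n + 2) = (a + b) * u (n + 1) - a * b * u n)
    (h0 : u 0 = α + β) (h1 : u 1 = α * a + β * b) (n : ℕ) :
    u n = α * a ^ n + β * b ^ n := by
  induction n using Nat.twoStepInduction with
  | zero => simpa using h0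
  | one => simpa using h1
  | more n ih₀ ih₁ => rw [hrec, ih₀, ih₁]; ring

namespace Matrix

theorem sq_eq_trace_smul_sub_det_smul_one_fin_two {R : Type*} [CommRing R]
    (M : Matrix (Fin 2) (Fin 2) R) : M ^ 2 = M.trace • M - M.det • 1 := by
  ext i j
  fin_cases i <;> fin_cases j <;>
    simp [sq, mul_apply, Fin.sum_univ_two, trace_fin_two, det_fin_two] <;> ring

theorem pow_add_two_fin_two {R : Type*} [CommRing R] (M : Matrix (Fin 2) (Fin 2) R) (n : ℕ) :
    M ^ (n + 2) = M.trace • M ^ (n + 1) - M.det • M ^ n := by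
  rw [pow_add, sq_eq_trace_smul_sub_det_smul_one_fin_two, mul_sub, mul_smul_comm, mul_smul_comm,
    mul_one, ← pow_succ]

theorem pow_apply_fin_two_of_det_eq_one {M : Matrix (Fin 2) (Fin 2) ℂ} {θ : ℂ}
    (hdet : M.det = 1) (htr : M.trace = 2 * cos θ) (hsin : sin θ ≠ 0) (n : ℕ) :
    (M ^ n) 0 0 =
      (1 + (M 0 0 - cos θ) / (sin θ * I)) / 2 * exp (θ * I) ^ n +
        (1 - (M 0 0 - cos θ) / (sin θ * I)) / 2 * exp (-θ * I) ^ n := by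
  have hsum : exp (θ * I) + exp (-θ * I) = 2 * cos θ := by rw [two_cos]
  refine eq_add_pow_of_two_step_recurrence (u := fun n ↦ (M ^ n) 0 0) (fun n ↦ ?_) ?_ ?_ n
  · rw [← exp_add, hsum, ← htr, neg_mul, add_neg_cancel, exp_zero, ← hdet]
    simp [pow_add_two_fin_two]
  · simp; ring
  · have hdiff : exp (θ * I) - exp (-θ * I) = 2 * sin θ * I := by
      rw [two_sin]; linear_combination (exp (θ * I) - exp (-θ * I)) * I_sq
    have hd : (M 0 0 - cos θ) / (sin θ * I) * (sin θ * I) = M 0 0 - cos θ :=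
      div_mul_cancel₀ _ (mul_ne_zero hsin I_ne_zero)
    simp only [pow_one]
    linear_combination (-1/2 : ℂ) * hsum - (M 0 0 - cos θ) / (sin θ * I) / 2 * hdiff - hd

theorem norm_pow_apply_fin_two_le_of_det_eq_one {M : Matrix (Fin 2) (Fin 2) ℂ} {θ : ℝ}
    (hdet : M.det = 1) (htr : M.trace = 2 * Real.cos θ) (hsin : Real.sin θ ≠ 0) (n : ℕ) :
    ‖(M ^ n) 0 0‖ ≤ 1 + ‖M 0 0 - Real.cos θ‖ / |Real.sin θ| := by
  rw [pow_apply_fin_two_of_det_eq_one hdet (by rw [htr, ofReal_cos]) (by exact_mod_cast hsin)]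
  set d := (M 0 0 - cos θ) / (sin θ * I)
  have hd : ‖d‖ = ‖M 0 0 - Real.cos θ‖ / |Real.sin θ| := by
    simp [d, ← ofReal_cos, ← ofReal_sin, norm_real]
  have hunit (t : ℝ) (k : ℕ) : ‖exp (t * I) ^ k‖ = 1 := by
    rw [norm_pow, norm_exp_ofReal_mul_I, one_pow]
  calc ‖(1 + d) / 2 * exp (θ * I) ^ n + (1 - d) / 2 * exp (-θ * I) ^ n‖
      ≤ ‖1 + d‖ / 2 + ‖1 - d‖ / 2 := by
        refine (norm_add_le _ _).trans_eq ?_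
        rw [norm_mul, norm_mul, norm_div, norm_div, ← ofReal_neg, hunit, hunit]
        norm_num
    _ ≤ (1 + ‖d‖) / 2 + (1 + ‖d‖) / 2 := by
        gcongr
        · exact (norm_add_le _ _).trans_eq (by rw [norm_one])
        · exact (norm_sub_le _ _).trans_eq (by rw [norm_one])
    _ = 1 + ‖M 0 0 - Real.cos θ‖ / |Real.sin θ| := by rw [hd]; ring

end Matrix

section iterate18

variable (φ x : ℝ)

theorem exp_I_mul_ofReal : exp (I * φ) = Real.cos φ + Real.sin φ * I := by
  rw [mul_comm, ← cos_add_sin_I, ofReal_cos, ofReal_sin]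

theorem exp_neg_I_mul_ofReal : exp (-(I * φ)) = Real.cos φ - Real.sin φ * I := by
  rw [mul_comm, ← neg_mul, ← cos_sub_sin_I, ofReal_cos, ofReal_sin]

theorem iterate18_apply_zero_zero :
    iterate18 φ x 0 0 = x * Real.cos φ + x * Real.sin φ * I := by
  simp [iterate18, mul_apply, exp_I_mul_ofReal]
  ring

theorem iterate18_trace : (iterate18 φ x).trace = 2 * (x * Real.cos φ : ℝ) := by
  simp [iterate18, trace_fin_two, exp_I_mul_ofReal, exp_neg_I_mul_ofReal]
  ring

theorem iterate18_det (hx : 1 ≤ x ^ 2) : (iterate18 φ x).det = 1 := by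
  have hsq : (Real.sqrt (x ^ 2 - 1) : ℂ) ^ 2 = x ^ 2 - 1 := by
    rw [← ofReal_pow, Real.sq_sqrt (by linarith)]; push_cast; ring
  have hexp : exp (I * φ) * exp (-(I * φ)) = 1 := by rw [← exp_add, add_neg_cancel, exp_zero]
  simp [iterate18, det_fin_two]
  linear_combination (x ^ 2 - Real.sqrt (x ^ 2 - 1) ^ 2 : ℂ) * hexp - hsq

end iterate18

theorem constant_phase_upper_bound_general (σ φ : ℝ)
    (hφ : φ ∈ Set.Ioo 0 (Real.pi / 2)) (hcos : Real.cos φ = 1 / σ) :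
    ∀ (n : ℕ) (x : ℝ), 1 ≤ x → x < σ →
      ‖((iterate18 φ x) ^ n) 0 0‖ ≤
        1 + x * Real.tan φ / Real.sqrt ((1 / Real.cos φ) ^ 2 - x ^ 2) := by
  intro n x hx hxσ
  have hcos_pos : 0 < Real.cos φ :=
    Real.cos_pos_of_mem_Ioo ⟨by linarith [hφ.1, Real.pi_pos], hφ.2⟩
  have hsin_pos : 0 < Real.sin φ :=
    Real.sin_pos_of_pos_of_lt_pi hφ.1 (by linarith [hφ.2, Real.pi_pos])
  set c := x * Real.cos φ with hc
  have hc_pos : 0 < c := by positivity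
  have hc_lt_one : c < 1 := (lt_div_iff₀ hcos_pos).1 (by rwa [hcos, one_div_one_div])
  have hs_pos : 0 < Real.sqrt (1 - c ^ 2) := Real.sqrt_pos.2 (by nlinarith)
  have hrad : Real.sqrt ((1 / Real.cos φ) ^ 2 - x ^ 2) = Real.sqrt (1 - c ^ 2) / Real.cos φ := by
    have hsec : (1 / Real.cos φ) ^ 2 - x ^ 2 = (1 - c ^ 2) / Real.cos φ ^ 2 := by
      rw [hc]; field_simp
    rw [hsec, Real.sqrt_div' _ (sq_nonneg _), Real.sqrt_sq hcos_pos.le]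
  have hcos_arccos : Real.cos (Real.arccos c) = c := Real.cos_arccos (by linarith) hc_lt_one.le
  have hbound := Matrix.norm_pow_apply_fin_two_le_of_det_eq_one (θ := Real.arccos c)
    (iterate18_det φ x (by nlinarith)) (by rw [iterate18_trace, hcos_arccos])
    (by rw [Real.sin_arccos]; exact hs_pos.ne') n
  have hdev : iterate18 φ x 0 0 - (c : ℂ) = (x * Real.sin φ : ℝ) * I := by
    rw [iterate18_apply_zero_zero, hc]; push_cast; ring
  rw [hcos_arccos, Real.sin_arccos, abs_of_pos hs_pos, hdev,
    norm_mul, norm_I, mul_one, norm_real, Real.norm_of_nonneg (by positivity)] at hbound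
  rwa [hrad, Real.tan_eq_sin_div_cos, ← mul_div_assoc, div_div_div_cancel_right₀ hcos_pos.ne']

/-- For `1 ≤ x < σ = sec φ`, the modulus of the top-left entry of the
constant-phase product is bounded above, independently of `n`, by
`1 + x tan φ / √(sec²φ - x²)`. -/
theorem constant_phase_upper_bound (σ φ : ℝ) (hσ : 1 < σ)
    (hφ : φ ∈ Set.Ioo 0 (Real.pi / 2)) (hcos : Real.cos φ = 1 / σ) :
    ∀ (n : ℕ) (x : ℝ), 1 ≤ x → x < σ →
      ‖((iterate18 φ x) ^ n) 0 0‖ ≤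
        1 + x * Real.tan φ / Real.sqrt ((1 / Real.cos φ) ^ 2 - x ^ 2) :=
  constant_phase_upper_bound_general σ φ hφ hcos
end
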